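/- Let n ≥ 2, J ⊆ [n-1], and let x ∈ SL_n(ℂ) be a J-Toeplitz matrix. Then for each i ∈ [n-1], −((x ẇ_J)^{-1} f (x ẇ_J))_{i,i+1} equals 1 if i ∈ J and equals 0 if i ∉ J. -/

import Mathlib

open Matrix

attribute [local instance] Classical.propDecidable

noncomputable section

namespace PetersonPaper

/-- Zero above the diagonal: `M i j = 0` whenever `i < j` (lower triangular). -/
def lowerTri (n : ℕ) (M : Matrix (Fin n) (Fin n) ℂ) : Prop :=
  ∀ i j : Fin n, i < j → M i j = 0

/-- Zero below the diagonal: `M i j = 0` whenever `j < i` (upper triangular). -/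
def upperTri (n : ℕ) (M : Matrix (Fin n) (Fin n) ℂ) : Prop :=
  ∀ i j : Fin n, j < i → M i j = 0

/-- The regular nilpotent matrix `f`, with `(i,j)` entry `1` iff `i = j+1`. -/
def fMat (n : ℕ) : Matrix (Fin n) (Fin n) ℂ :=
  fun i j => if (i : ℕ) = (j : ℕ) + 1 then 1 else 0

/-- `Δ_i(g)`: the lower-right `(n-i)×(n-i)` minor of `g`.  Here `i : Fin (n-1)`
encodes the (1-based) index `i.1 + 1 ∈ {1,…,n-1}`. -/
def Delta (n : ℕ) (g : Matrix (Fin n) (Fin n) ℂ) (i : Fin (n-1)) : ℂ :=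
  (g.submatrix
    (fun k : Fin (n - (i.1 + 1)) => (⟨k.1 + (i.1 + 1), by have := k.isLt; omega⟩ : Fin n))
    (fun k : Fin (n - (i.1 + 1)) => (⟨k.1 + (i.1 + 1), by have := k.isLt; omega⟩ : Fin n))).det

/-- `q_i(g) = -(g⁻¹ f g)_{i,i+1}` (1-based indices; `i : Fin (n-1)` encodes `i.1+1`). -/
def qfun (n : ℕ) (g : Matrix (Fin n) (Fin n) ℂ) (i : Fin (n-1)) : ℂ :=
  -((g⁻¹ * fMat n * g) (⟨i.1, by have := i.isLt; omega⟩ : Fin n)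
      (⟨i.1 + 1, by have := i.isLt; omega⟩ : Fin n))

/-- The (0-based) gap `c` (between positions `c` and `c+1` of `Fin n`) belongs to
`J ⊆ [n-1]`; `c` encodes the 1-based element `c+1` of `[n-1]`. -/
def gapMem (n : ℕ) (J : Set (Fin (n-1))) (c : ℕ) : Prop :=
  ∃ h : c < n - 1, (⟨c, h⟩ : Fin (n-1)) ∈ J

/-- The (0-based) first position of the block of the partition of `{0,…,n-1}`
determined by `J` containing the position `p`. -/
def blockStart (n : ℕ) (J : Set (Fin (n-1))) (p : Fin n) : ℕ :=
  sInf {a : ℕ | a ≤ p.1 ∧ ∀ c : ℕ, a ≤ c → c < p.1 → gapMem n J c}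

/-- The (0-based) last position of the block of the partition of `{0,…,n-1}`
determined by `J` containing the position `p`. -/
def blockEnd (n : ℕ) (J : Set (Fin (n-1))) (p : Fin n) : ℕ :=
  sSup {b : ℕ | b < n ∧ p.1 ≤ b ∧ ∀ c : ℕ, p.1 ≤ c → c < b → gapMem n J c}

lemma blockStart_le (n : ℕ) (J : Set (Fin (n-1))) (p : Fin n) : blockStart n J p ≤ p.1 :=
  Nat.sInf_le ⟨le_refl _, fun c hc1 hc2 => absurd (lt_of_le_of_lt hc1 hc2) (lt_irrefl _)⟩

lemma blockEnd_mem (n : ℕ) (J : Set (Fin (n-1))) (p : Fin n) :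
    blockEnd n J p ∈ {b : ℕ | b < n ∧ p.1 ≤ b ∧ ∀ c : ℕ, p.1 ≤ c → c < b → gapMem n J c} :=
  Nat.sSup_mem
    ⟨p.1, p.isLt, le_refl _, fun c hc1 hc2 => absurd (lt_of_le_of_lt hc1 hc2) (lt_irrefl _)⟩
    ⟨n, fun _ hb => le_of_lt hb.1⟩

lemma blockEnd_lt (n : ℕ) (J : Set (Fin (n-1))) (p : Fin n) : blockEnd n J p < n :=
  (blockEnd_mem n J p).1

lemma le_blockEnd (n : ℕ) (J : Set (Fin (n-1))) (p : Fin n) : p.1 ≤ blockEnd n J p :=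
  (blockEnd_mem n J p).2.1

/-- The representative `ẇ_J` of the longest element of the Young subgroup determined
by `J ⊆ [n-1]`: block diagonal, with the antidiagonal matrix with entries
`(-1)^(row - blockStart)` on each block of the partition determined by `J`. -/
def wJ (n : ℕ) (J : Set (Fin (n-1))) : Matrix (Fin n) (Fin n) ℂ :=
  fun p q =>
    if (p : ℕ) + (q : ℕ) = blockStart n J p + blockEnd n J p
    then (-1 : ℂ) ^ ((p : ℕ) - blockStart n J p) else 0

/-- A `J`-Toeplitz matrix: block diagonal with respect to the partition determined by
`J`, each block being lower triangular Toeplitz with `1`'s on the diagonal. -/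
def IsJToeplitz (n : ℕ) (J : Set (Fin (n-1))) (x : Matrix (Fin n) (Fin n) ℂ) : Prop :=
  ∃ c : ℕ → ℕ → ℂ, (∀ a, c a 0 = 1) ∧
    ∀ p q : Fin n, x p q =
      if blockStart n J p = blockStart n J q ∧ (q : ℕ) ≤ (p : ℕ)
      then c (blockStart n J p) ((p : ℕ) - (q : ℕ)) else 0

/-- `g ∈ B⁺ ẇ_K B⁻` (at the level of matrices of determinant 1). -/
def inBruhatPlus (n : ℕ) (K : Set (Fin (n-1))) (g : Matrix (Fin n) (Fin n) ℂ) : Prop :=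
  ∃ b₁ b₂ : Matrix (Fin n) (Fin n) ℂ,
    b₁.det = 1 ∧ b₂.det = 1 ∧ upperTri n b₁ ∧ lowerTri n b₂ ∧ g = b₁ * wJ n K * b₂

/-- `g ∈ B⁻ ẇ_J B⁻` (at the level of matrices of determinant 1). -/
def inBruhatMinus (n : ℕ) (J : Set (Fin (n-1))) (g : Matrix (Fin n) (Fin n) ℂ) : Prop :=
  ∃ b₁ b₂ : Matrix (Fin n) (Fin n) ℂ,
    b₁.det = 1 ∧ b₂.det = 1 ∧ lowerTri n b₁ ∧ lowerTri n b₂ ∧ g = b₁ * wJ n J * b₂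

/-!
Write `g = x ẇ_J`. Both `x` and `ẇ_J` are block diagonal for the partition defined by `J`, hence
so are `g` and `g⁻¹`, while `f` is block lower triangular. So `g⁻¹ f g` is block lower triangular,
and its `(i, i+1)` entry vanishes when `i ∉ J`, i.e. when `i` and `i+1` lie in different blocks.
For `i ∈ J`, a `J`-Toeplitz block commutes with the shift inside the block and `ẇ_J` reverses the
block with alternating signs, so `f g e_{i+1} = -g e_i` on the block of `i`. Row `i` of `g⁻¹` only
sees that block, whence `(g⁻¹ f g)_{i,i+1} = -(g⁻¹ g)_{i,i} = -1`.
-/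

end PetersonPaper

namespace Matrix

variable {m α R : Type*} [LinearOrder α] {b : m → α}

lemma blockTriangular_and_toDual_of_apply_eq_zero [Zero R] {M : Matrix m m R}
    (h : ∀ i j, b i ≠ b j → M i j = 0) :
    M.BlockTriangular b ∧ M.BlockTriangular (OrderDual.toDual ∘ b) :=
  ⟨fun i j hij => h i j hij.ne', fun i j hij => h i j (OrderDual.toDual_lt_toDual.1 hij).ne⟩

lemma BlockTriangular.apply_eq_zero_of_ne [Zero R] {M : Matrix m m R}
    (h₁ : M.BlockTriangular b) (h₂ : M.BlockTriangular (OrderDual.toDual ∘ b)) {i j : m}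
    (hij : b i ≠ b j) : M i j = 0 :=
  hij.lt_or_gt.elim (fun h => h₂ (OrderDual.toDual_lt_toDual.2 h)) (fun h => h₁ h)

lemma inv_mul_mul_apply_eq_neg_one [Fintype m] [DecidableEq m] [CommRing R]
    {g M : Matrix m m R} (hg : IsUnit g.det) {p q : m}
    (h : ∀ k, g⁻¹ p k ≠ 0 → (M * g) k q = -g k p) : (g⁻¹ * M * g) p q = -1 := by
  calc (g⁻¹ * M * g) p q = ∑ k, -(g⁻¹ p k * g k p) := by
        rw [mul_assoc, mul_apply]
        refine Finset.sum_congr rfl fun k _ => ?_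
        by_cases hk : g⁻¹ p k = 0
        · simp [hk]
        · rw [h k hk, mul_neg]
    _ = -(g⁻¹ * g) p p := by rw [mul_apply, Finset.sum_neg_distrib]
    _ = -1 := by rw [nonsing_inv_mul _ hg, one_apply_eq]

end Matrix

namespace PetersonPaper

section Blocks

variable {n : ℕ}

lemma fMat_mul_apply_of_val_eq_succ {k r : Fin n} (h : k.1 = r.1 + 1)
    (M : Matrix (Fin n) (Fin n) ℂ) (q : Fin n) : (fMat n * M) k q = M r q := by
  rw [mul_apply, Finset.sum_eq_single r]
  · simp [fMat, h]
  · intro j _ hj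
    simp only [fMat, ite_mul, one_mul, zero_mul, ite_eq_right_iff]
    exact fun h' => absurd (Fin.ext (by omega)) hj
  · simp

lemma fMat_mul_apply_of_val_eq_zero {k : Fin n} (h : k.1 = 0)
    (M : Matrix (Fin n) (Fin n) ℂ) (q : Fin n) : (fMat n * M) k q = 0 := by
  rw [mul_apply]
  exact Finset.sum_eq_zero fun r _ => by simp [fMat, h]

variable (J : Set (Fin (n-1)))

/-- Positions `a ≤ b` lie in one block iff every gap `c ∈ [a, b)` belongs to `J`. -/
def GapsMem (a b : ℕ) : Prop :=
  ∀ c : ℕ, a ≤ c → c < b → gapMem n J c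

variable {J} in
lemma GapsMem.trans {a b d : ℕ} (h₁ : GapsMem J a b) (h₂ : GapsMem J b d) : GapsMem J a d :=
  fun c hac hcd => (lt_or_ge c b).elim (h₁ c hac) (fun hbc => h₂ c hbc hcd)

variable {J} in
lemma GapsMem.mono {a b a' b' : ℕ} (h : GapsMem J a b) (ha : a ≤ a') (hb : b' ≤ b) :
    GapsMem J a' b' :=
  fun c hac hcb => h c (ha.trans hac) (hcb.trans_le hb)

lemma gapsMem_self (a : ℕ) : GapsMem J a a :=
  fun _ hac hca => absurd (hac.trans_lt hca) (lt_irrefl _)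

lemma gapsMem_blockStart (p : Fin n) : GapsMem J (blockStart n J p) p :=
  (Nat.sInf_mem (s := {a : ℕ | a ≤ p.1 ∧ GapsMem J a p}) ⟨p, le_rfl, gapsMem_self J _⟩).2

lemma gapsMem_blockEnd (p : Fin n) : GapsMem J p (blockEnd n J p) :=
  (blockEnd_mem n J p).2.2

lemma gapsMem_blockStart_blockEnd (p : Fin n) :
    GapsMem J (blockStart n J p) (blockEnd n J p) :=
  (gapsMem_blockStart J p).trans (gapsMem_blockEnd J p)

lemma blockStart_le_of_gapsMem {a : ℕ} {p : Fin n} (ha : a ≤ p) (h : GapsMem J a p) :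
    blockStart n J p ≤ a :=
  Nat.sInf_le ⟨ha, h⟩

lemma le_blockEnd_of_gapsMem {b : ℕ} {p : Fin n} (hb : b < n) (hp : p.1 ≤ b)
    (h : GapsMem J p b) : b ≤ blockEnd n J p :=
  le_csSup ⟨n, fun _ hb => hb.1.le⟩ ⟨hb, hp, h⟩

lemma blockStart_eq_and_blockEnd_eq {p r : Fin n} (h₁ : blockStart n J p ≤ r)
    (h₂ : r.1 ≤ blockEnd n J p) :
    blockStart n J r = blockStart n J p ∧ blockEnd n J r = blockEnd n J p := by
  have hp := gapsMem_blockStart_blockEnd J p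
  have hbp := blockStart_le n J p
  have hep := le_blockEnd n J p
  have hb_le : blockStart n J r ≤ blockStart n J p :=
    blockStart_le_of_gapsMem J h₁ (hp.mono le_rfl h₂)
  have he_le : blockEnd n J p ≤ blockEnd n J r :=
    le_blockEnd_of_gapsMem J (blockEnd_lt n J p) h₂ (hp.mono h₁ le_rfl)
  have hb_ge : blockStart n J p ≤ blockStart n J r :=
    blockStart_le_of_gapsMem J (hb_le.trans hbp)
      (((gapsMem_blockStart J r).trans (hp.mono h₁ le_rfl)).mono le_rfl hep)
  have he_ge : blockEnd n J r ≤ blockEnd n J p :=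
    le_blockEnd_of_gapsMem J (blockEnd_lt n J r) (hep.trans he_le)
      (((hp.mono le_rfl h₂).trans (gapsMem_blockEnd J r)).mono hbp le_rfl)
  exact ⟨le_antisymm hb_le hb_ge, le_antisymm he_ge he_le⟩

lemma blockStart_eq_iff {p r : Fin n} :
    blockStart n J r = blockStart n J p ↔ blockStart n J p ≤ r ∧ r.1 ≤ blockEnd n J p := by
  refine ⟨fun h => ⟨h ▸ blockStart_le n J r, ?_⟩,
    fun h => (blockStart_eq_and_blockEnd_eq J h.1 h.2).1⟩
  rcases le_total r.1 p with hrp | hpr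
  · exact hrp.trans (le_blockEnd n J p)
  · have hp : blockStart n J r ≤ p := h ▸ blockStart_le n J p
    rw [(blockStart_eq_and_blockEnd_eq J hp (hpr.trans (le_blockEnd n J r))).2]
    exact le_blockEnd n J r

lemma blockEnd_eq_of_blockStart_eq {p r : Fin n} (h : blockStart n J r = blockStart n J p) :
    blockEnd n J r = blockEnd n J p :=
  (blockStart_eq_and_blockEnd_eq J ((blockStart_eq_iff J).1 h).1 ((blockStart_eq_iff J).1 h).2).2

lemma gapMem_iff_mem (i : Fin (n-1)) : gapMem n J i ↔ i ∈ J :=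
  ⟨fun ⟨_, h⟩ => h, fun h => ⟨i.isLt, h⟩⟩

lemma blockStart_eq_iff_gapMem {p q : Fin n} (hq : q.1 = p.1 + 1) :
    blockStart n J q = blockStart n J p ↔ gapMem n J p := by
  constructor
  · intro h
    exact gapsMem_blockStart J q p (h ▸ blockStart_le n J p) (by omega)
  · intro h
    refine (blockStart_eq_iff J).2 ⟨by have := blockStart_le n J p; omega, ?_⟩
    exact le_blockEnd_of_gapsMem J q.isLt (by omega) fun c hpc hcq => by
      obtain rfl : c = p := by omega
      exact h

lemma blockStart_mono : Monotone (blockStart n J) := by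
  intro p q hpq
  by_cases h : blockStart n J q ≤ p
  · exact ((blockStart_eq_iff J).2 ⟨h, (show p.1 ≤ q from hpq).trans (le_blockEnd n J q)⟩).le
  · exact (blockStart_le n J p).trans (not_le.1 h).le

/-- `ẇ_J` reverses each block: position `q` goes to `blockReflect J q`. -/
def blockReflect (q : Fin n) : Fin n :=
  ⟨blockStart n J q + blockEnd n J q - q, by
    have := blockStart_le n J q; have := blockEnd_lt n J q; omega⟩

lemma blockReflect_val (q : Fin n) :
    (blockReflect J q).1 = blockStart n J q + blockEnd n J q - q := rfl

lemma blockStart_blockReflect (q : Fin n) :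
    blockStart n J (blockReflect J q) = blockStart n J q ∧
      blockEnd n J (blockReflect J q) = blockEnd n J q := by
  have := blockStart_le n J q
  have := le_blockEnd n J q
  exact blockStart_eq_and_blockEnd_eq J (by rw [blockReflect_val]; omega)
    (by rw [blockReflect_val]; omega)

lemma blockReflect_blockReflect (q : Fin n) : blockReflect J (blockReflect J q) = q := by
  have := blockStart_le n J q
  have := le_blockEnd n J q
  obtain ⟨hb, he⟩ := blockStart_blockReflect J q
  ext
  rw [blockReflect_val, hb, he, blockReflect_val]
  omega

lemma wJ_apply (r q : Fin n) :
    wJ n J r q = if r = blockReflect J q then (-1 : ℂ) ^ (blockEnd n J q - q) else 0 := by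
  have := blockStart_le n J q
  have := le_blockEnd n J q
  unfold wJ
  by_cases h : r = blockReflect J q
  · obtain ⟨hb, he⟩ := blockStart_blockReflect J q
    subst h
    rw [if_pos rfl, hb, he, if_pos (by rw [blockReflect_val]; omega), blockReflect_val]
    congr 1
    omega
  · rw [if_neg h, if_neg]
    intro hrq
    have := blockStart_le n J r
    have := le_blockEnd n J r
    obtain ⟨hb, he⟩ := blockStart_eq_and_blockEnd_eq J (p := r) (r := q) (by omega) (by omega)
    exact h (Fin.ext (by rw [blockReflect_val, hb, he]; omega))

lemma mul_wJ_apply (M : Matrix (Fin n) (Fin n) ℂ) (k q : Fin n) :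
    (M * wJ n J) k q = M k (blockReflect J q) * (-1 : ℂ) ^ (blockEnd n J q - q) := by
  simp [mul_apply, wJ_apply]

lemma isUnit_det_wJ : IsUnit (wJ n J).det := by
  set s : Fin n → ℂ := fun q => (-1) ^ (blockEnd n J q - q)
  have hsq : wJ n J * wJ n J = diagonal fun q => s (blockReflect J q) * s q := by
    ext k q
    rw [mul_wJ_apply, wJ_apply, blockReflect_blockReflect, diagonal_apply]
    split_ifs with h
    · rw [h]
    · simp
  have hdet := congrArg det hsq
  rw [det_mul, det_diagonal] at hdet
  have hunit : IsUnit ((wJ n J).det * (wJ n J).det) := by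
    rw [hdet]
    exact isUnit_iff_ne_zero.2 (Finset.prod_ne_zero_iff.2 fun q _ => by simp [s])
  exact (IsUnit.mul_iff.1 hunit).1

lemma fMat_blockTriangular : (fMat n).BlockTriangular (OrderDual.toDual ∘ blockStart n J) := by
  intro p q hpq
  simp only [fMat, ite_eq_right_iff]
  intro h
  exact absurd (blockStart_mono J (show q ≤ p from Fin.le_def.2 (by omega)))
    (not_le.2 (OrderDual.toDual_lt_toDual.1 hpq))

variable {J}

lemma IsJToeplitz.apply_eq_zero {x : Matrix (Fin n) (Fin n) ℂ} (hx : IsJToeplitz n J x)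
    {p q : Fin n} (h : blockStart n J p ≠ blockStart n J q) : x p q = 0 := by
  obtain ⟨c, -, hcx⟩ := hx
  rw [hcx, if_neg fun h' => h h'.1]

lemma IsJToeplitz.fMat_mul_apply {x : Matrix (Fin n) (Fin n) ℂ} (hx : IsJToeplitz n J x)
    {k m m' : Fin n} (hm' : m'.1 = m.1 + 1) (hm : blockStart n J m' = blockStart n J m)
    (hk : blockStart n J k = blockStart n J m) : (fMat n * x) k m = x k m' := by
  obtain ⟨c, -, hcx⟩ := hx
  rcases Nat.eq_zero_or_pos k.1 with h0 | hpos
  · rw [fMat_mul_apply_of_val_eq_zero h0, hcx, if_neg (by omega)]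
  set r : Fin n := ⟨k.1 - 1, by omega⟩
  have hr : k.1 = r.1 + 1 := by simp only [r]; omega
  rw [fMat_mul_apply_of_val_eq_succ hr, hcx, hcx]
  by_cases hmr : m.1 ≤ r.1
  · have hbr : blockStart n J r = blockStart n J k := (blockStart_eq_iff J).2
      ⟨by have := blockStart_le n J m; omega, by have := le_blockEnd n J k; omega⟩
    rw [if_pos ⟨hbr.trans hk, hmr⟩, if_pos ⟨hk.trans hm.symm, by omega⟩, hbr]
    congr 1
    omega
  · rw [if_neg fun h => hmr h.2, if_neg fun h => by have := h.2; omega]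

lemma IsJToeplitz.fMat_mul_mul_wJ_apply {x : Matrix (Fin n) (Fin n) ℂ} (hx : IsJToeplitz n J x)
    {p p' k : Fin n} (hp' : p'.1 = p.1 + 1) (hpp' : blockStart n J p' = blockStart n J p)
    (hk : blockStart n J k = blockStart n J p) :
    (fMat n * (x * wJ n J)) k p' = -(x * wJ n J) k p := by
  have he : blockEnd n J p' = blockEnd n J p := blockEnd_eq_of_blockStart_eq J hpp'
  have hp'e : p'.1 ≤ blockEnd n J p := he ▸ le_blockEnd n J p'
  obtain ⟨hσb, -⟩ := blockStart_blockReflect J p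
  obtain ⟨hσb', -⟩ := blockStart_blockReflect J p'
  have hσ : (blockReflect J p).1 = (blockReflect J p').1 + 1 := by
    rw [blockReflect_val, blockReflect_val, hpp', he]
    omega
  rw [← mul_assoc, mul_wJ_apply, mul_wJ_apply,
    hx.fMat_mul_apply hσ (by rw [hσb, hσb', hpp']) (by rw [hσb', hpp', hk]),
    he, show blockEnd n J p - p = blockEnd n J p - p' + 1 by omega, pow_succ]
  ring

lemma IsJToeplitz.mul_wJ_apply_eq_zero {x : Matrix (Fin n) (Fin n) ℂ} (hx : IsJToeplitz n J x)
    {p q : Fin n} (h : blockStart n J p ≠ blockStart n J q) : (x * wJ n J) p q = 0 := by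
  rw [mul_wJ_apply, hx.apply_eq_zero (by rwa [(blockStart_blockReflect J q).1]), zero_mul]

end Blocks

/-- Lemma: if `x ∈ SL_n(ℂ)` is `J`-Toeplitz then
`q_i(x ẇ_J) = -((x ẇ_J)⁻¹ f (x ẇ_J))_{i,i+1}` equals `1` if `i ∈ J` and `0` if
`i ∉ J`. -/
theorem qfun_of_JToeplitz (n : ℕ) (J : Set (Fin (n-1)))
    (x : Matrix (Fin n) (Fin n) ℂ) (hdet : x.det = 1) (hx : IsJToeplitz n J x)
    (i : Fin (n-1)) :
    -(((x * wJ n J)⁻¹ * fMat n * (x * wJ n J))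
        (⟨i.1, by have := i.isLt; omega⟩ : Fin n)
        (⟨i.1 + 1, by have := i.isLt; omega⟩ : Fin n))
      = if i ∈ J then 1 else 0 := by
  set g := x * wJ n J
  set p : Fin n := ⟨i.1, by have := i.isLt; omega⟩
  set p' : Fin n := ⟨i.1 + 1, by have := i.isLt; omega⟩
  have hg : IsUnit g.det := by
    rw [det_mul, hdet, one_mul]
    exact isUnit_det_wJ J
  have : Invertible g := invertibleOfIsUnitDet g hg
  obtain ⟨hg₁, hg₂⟩ : g.BlockTriangular (blockStart n J) ∧
      g.BlockTriangular (OrderDual.toDual ∘ blockStart n J) :=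
    blockTriangular_and_toDual_of_apply_eq_zero fun _ _ => hx.mul_wJ_apply_eq_zero
  have hginv₁ := blockTriangular_inv_of_blockTriangular hg₁
  have hginv₂ := blockTriangular_inv_of_blockTriangular hg₂
  have hpp' : blockStart n J p' = blockStart n J p ↔ i ∈ J :=
    (blockStart_eq_iff_gapMem J rfl).trans (gapMem_iff_mem J i)
  split_ifs with hi
  · rw [inv_mul_mul_apply_eq_neg_one hg fun k hk => hx.fMat_mul_mul_wJ_apply rfl (hpp'.2 hi)
      (not_not.1 fun h => hk (hginv₁.apply_eq_zero_of_ne hginv₂ (Ne.symm h))),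
      neg_neg]
  · have hlt : blockStart n J p < blockStart n J p' :=
      (blockStart_mono J (Fin.le_def.2 (Nat.le_succ _))).lt_of_ne fun h => hi (hpp'.1 h.symm)
    rw [((hginv₂.mul (fMat_blockTriangular J)).mul hg₂) hlt, neg_zero]

end PetersonPaper
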